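/- arXiv:2101.09457 — 4 statements merged into one kernel-verified Lean document; each statement's English description precedes it below -/
import Mathlib

section
/- Let n ≥ 3 be an integer and let ψ : (−1,1) → ℝ be continuously differentiable with ∫_{−1}^{1} (1−ξ²)^{(n−3)/2} |ψ(ξ)|² dξ = 1 and with ψ, ψ' such that all integrals below are finite. Then ∫_{−1}^{1} [ (1−ξ²)^{(n−1)/2} |ψ'(ξ)|² + γ (1−ξ²)^{(n−3)/2} ξ |ψ(ξ)|² ] dξ ≥ −γ²/(n−1)² for every γ ≥ 0. -/
/-!
With `W = (1 - ξ²)^((n-1)/2)` one has `W' = -(n-1) ξ (1 - ξ²)^((n-3)/2)`, so for `a = γ/(n-1)` the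
integrand is `W ψ'² - a W' ψ² = W (ψ' + a ψ)² - a² W ψ² - a (W ψ²)'`. Integrating over
`[c, b] ⊂ (-1, 1)` and using `W ≤ (1 - ξ²)^((n-3)/2)` together with the normalisation bounds the
integral below by `-a² - a W(b) ψ(b)²`. The boundary term at `-1` has the favourable sign, and the
one at `1` is frequently small as `b → 1`: `W ψ² = (1 - ξ)(1 + ξ)(1 - ξ²)^((n-3)/2) ψ²` is `1 - ξ`
times an integrable function, and `1/(1 - ξ)` is not integrable at `1`.
-/

open Real intervalIntegral Filter Set Topology
open MeasureTheory (volume ae_restrict_of_forall_mem restrict_Ioo_eq_restrict_Ioc)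

theorem one_sub_sq_pos_of_mem_Ioo {x : ℝ} (hx : x ∈ Ioo (-1 : ℝ) 1) : 0 < 1 - x ^ 2 := by
  nlinarith [hx.1, hx.2]

theorem one_sub_sq_rpow_eq_mul (s : ℝ) {x : ℝ} (hx : x ∈ Ioo (-1 : ℝ) 1) :
    (1 - x ^ 2) ^ ((s - 1) / 2) = (1 - x ^ 2) ^ ((s - 3) / 2) * (1 - x ^ 2) := by
  rw [← rpow_add_one (one_sub_sq_pos_of_mem_Ioo hx).ne']
  ring_nf

theorem hasDerivAt_one_sub_sq_rpow (s : ℝ) {x : ℝ} (hx : x ∈ Ioo (-1 : ℝ) 1) :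
    HasDerivAt (fun ξ => (1 - ξ ^ 2) ^ ((s - 1) / 2)) (-(s - 1) * x * (1 - x ^ 2) ^ ((s - 3) / 2))
      x := by
  convert ((hasDerivAt_pow 2 x).const_sub 1).rpow_const
    (p := (s - 1) / 2) (Or.inl (one_sub_sq_pos_of_mem_Ioo hx).ne') using 1
  ring_nf

theorem continuousOn_one_sub_sq_rpow (p : ℝ) :
    ContinuousOn (fun ξ : ℝ => (1 - ξ ^ 2) ^ p) (Ioo (-1) 1) := fun _ hx =>
  ((continuous_const.sub (continuous_pow 2)).continuousAt.rpow_const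
    (Or.inl (one_sub_sq_pos_of_mem_Ioo hx).ne')).continuousWithinAt

theorem le_integral_weighted_deriv_sq_sub {W W' ψ ψ' : ℝ → ℝ} {c b : ℝ} (a : ℝ) (hcb : c ≤ b)
    (hW : ∀ x ∈ Icc c b, HasDerivAt W (W' x) x) (hψ : ∀ x ∈ Icc c b, HasDerivAt ψ (ψ' x) x)
    (hW' : ContinuousOn W' (Icc c b)) (hψ' : ContinuousOn ψ' (Icc c b))
    (hW₀ : ∀ x ∈ Icc c b, 0 ≤ W x) :
    -a ^ 2 * (∫ x in c..b, W x * ψ x ^ 2) - a * (W b * ψ b ^ 2 - W c * ψ c ^ 2)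
      ≤ ∫ x in c..b, (W x * ψ' x ^ 2 - a * W' x * ψ x ^ 2) := by
  rw [← uIcc_of_le hcb] at hW hψ hW' hψ'
  have hWc : ContinuousOn W (uIcc c b) := fun x hx => (hW x hx).continuousAt.continuousWithinAt
  have hψc : ContinuousOn ψ (uIcc c b) := fun x hx => (hψ x hx).continuousAt.continuousWithinAt
  have hFTC : ∫ x in c..b, (W' x * ψ x ^ 2 + W x * (2 * ψ x * ψ' x))
      = W b * ψ b ^ 2 - W c * ψ c ^ 2 := by
    refine integral_eq_sub_of_hasDerivAt (f := fun x => W x * ψ x ^ 2) (fun x hx => ?_) ?_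
    · simpa using (hW x hx).fun_mul ((hψ x hx).fun_pow 2)
    · apply ContinuousOn.intervalIntegrable; fun_prop
  have hsq : ∫ x in c..b, W x * (ψ' x + a * ψ x) ^ 2
      = (∫ x in c..b, (W x * ψ' x ^ 2 - a * W' x * ψ x ^ 2))
        + a ^ 2 * (∫ x in c..b, W x * ψ x ^ 2)
        + a * ∫ x in c..b, (W' x * ψ x ^ 2 + W x * (2 * ψ x * ψ' x)) := by
    rw [← integral_const_mul, ← integral_const_mul, ← integral_add, ← integral_add]
    · exact integral_congr fun x _ => by ring
    all_goals apply ContinuousOn.intervalIntegrable; fun_prop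
  have hnonneg : 0 ≤ ∫ x in c..b, W x * (ψ' x + a * ψ x) ^ 2 :=
    integral_nonneg hcb fun x hx => mul_nonneg (hW₀ x hx) (sq_nonneg _)
  rw [hFTC] at hsq
  linarith

theorem frequently_sub_mul_lt_of_intervalIntegrable {g : ℝ → ℝ} {a b δ : ℝ} (hab : a < b)
    (hg : IntervalIntegrable g volume a b) (hδ : 0 < δ) :
    ∃ᶠ x in 𝓝[<] b, (b - x) * g x < δ := by
  by_contra h
  simp only [not_frequently, not_lt] at h
  obtain ⟨c, ⟨hac, hcb⟩, hc⟩ := (mem_nhdsLT_iff_exists_mem_Ico_Ioo_subset hab).1 h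
  have hinv : IntervalIntegrable (fun x => (x - b)⁻¹) volume c b := by
    refine ((hg.mono_set ?_).const_mul δ⁻¹).mono_fun (by fun_prop) ?_
    · exact uIcc_subset_uIcc (by simp [uIcc_of_lt hab, hac, hcb.le]) right_mem_uIcc
    rw [uIoc_of_le hcb.le, ← restrict_Ioo_eq_restrict_Ioc]
    refine ae_restrict_of_forall_mem measurableSet_Ioo fun x hx => ?_
    have hbx : 0 < b - x := sub_pos.2 hx.2
    show ‖(x - b)⁻¹‖ ≤ ‖δ⁻¹ * g x‖
    rw [Real.norm_eq_abs, Real.norm_eq_abs, abs_inv, abs_sub_comm, abs_of_pos hbx]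
    refine (le_abs_self _).trans' ?_
    rw [inv_mul_eq_div, le_div_iff₀ hδ, inv_mul_eq_div, div_le_iff₀ hbx, mul_comm]
    exact hc hx
  simp [intervalIntegrable_sub_inv_iff, hcb.ne] at hinv

theorem le_intervalIntegral_of_frequently_nhdsGT {f : ℝ → ℝ} {a b m : ℝ} (hab : a < b)
    (hf : IntervalIntegrable f volume a b) (h : ∃ᶠ c in 𝓝[>] a, m ≤ ∫ x in c..b, f x) :
    m ≤ ∫ x in a..b, f x := by
  have hcont :=
    continuousOn_primitive_interval_left ((intervalIntegrable_iff').1 hf) a left_mem_uIcc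
  refine isClosed_Ici.mem_of_frequently_of_tendsto h (hcont.mono_of_mem_nhdsWithin ?_).tendsto
  rw [uIcc_of_le hab.le]
  exact Icc_mem_nhdsGT hab

theorem le_intervalIntegral_of_frequently_nhdsLT {f : ℝ → ℝ} {a b m : ℝ} (hab : a < b)
    (hf : IntervalIntegrable f volume a b) (h : ∃ᶠ c in 𝓝[<] b, m ≤ ∫ x in a..c, f x) :
    m ≤ ∫ x in a..b, f x := by
  have hcont := continuousOn_primitive_interval' hf left_mem_uIcc b right_mem_uIcc
  refine isClosed_Ici.mem_of_frequently_of_tendsto h (hcont.mono_of_mem_nhdsWithin ?_).tendsto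
  rw [uIcc_of_le hab.le]
  exact Icc_mem_nhdsLT hab

theorem le_integral_dipole_of_subinterval {s γ c b : ℝ} {ψ ψ' : ℝ → ℝ} (hs : 1 < s) (hγ : 0 ≤ γ)
    (hψ : ∀ ξ ∈ Ioo (-1 : ℝ) 1, HasDerivAt ψ (ψ' ξ) ξ) (hψ' : ContinuousOn ψ' (Ioo (-1 : ℝ) 1))
    (hc : -1 < c) (hcb : c ≤ b) (hb : b < 1) :
    -(γ / (s - 1)) ^ 2 * (∫ ξ in c..b, (1 - ξ ^ 2) ^ ((s - 3) / 2) * ψ ξ ^ 2)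
        - γ / (s - 1) * ((1 - b ^ 2) ^ ((s - 1) / 2) * ψ b ^ 2)
      ≤ ∫ ξ in c..b, ((1 - ξ ^ 2) ^ ((s - 1) / 2) * ψ' ξ ^ 2
          + γ * (1 - ξ ^ 2) ^ ((s - 3) / 2) * ξ * ψ ξ ^ 2) := by
  set a := γ / (s - 1)
  have ha : 0 ≤ a := div_nonneg hγ (by linarith)
  have haγ : γ = a * (s - 1) := (div_mul_cancel₀ γ (by linarith)).symm
  have hsub : Icc c b ⊆ Ioo (-1) 1 := Icc_subset_Ioo hc hb
  have hψc : ContinuousOn ψ (Ioo (-1) 1) := fun x hx =>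
    (hψ x hx).continuousAt.continuousWithinAt
  have hmono : ∫ ξ in c..b, (1 - ξ ^ 2) ^ ((s - 1) / 2) * ψ ξ ^ 2
      ≤ ∫ ξ in c..b, (1 - ξ ^ 2) ^ ((s - 3) / 2) * ψ ξ ^ 2 := by
    have hint : ∀ p : ℝ, IntervalIntegrable (fun ξ => (1 - ξ ^ 2) ^ p * ψ ξ ^ 2) volume c b :=
      fun p =>
        (((continuousOn_one_sub_sq_rpow p).mul (hψc.pow 2)).mono hsub).intervalIntegrable_of_Icc hcb
    refine integral_mono_on hcb (hint _) (hint _) fun x hx => ?_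
    have hx' := one_sub_sq_pos_of_mem_Ioo (hsub hx)
    rw [one_sub_sq_rpow_eq_mul s (hsub hx)]
    exact mul_le_mul_of_nonneg_right
      (mul_le_of_le_one_right (rpow_nonneg hx'.le _) (by nlinarith)) (sq_nonneg _)
  have hc₀ : 0 ≤ (1 - c ^ 2) ^ ((s - 1) / 2) * ψ c ^ 2 := by
    have := one_sub_sq_pos_of_mem_Ioo (hsub (left_mem_Icc.2 hcb))
    positivity
  calc _ ≤ -a ^ 2 * (∫ ξ in c..b, (1 - ξ ^ 2) ^ ((s - 1) / 2) * ψ ξ ^ 2)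
        - a * ((1 - b ^ 2) ^ ((s - 1) / 2) * ψ b ^ 2 - (1 - c ^ 2) ^ ((s - 1) / 2) * ψ c ^ 2) := by
        linarith [mul_le_mul_of_nonneg_left hmono (sq_nonneg a), mul_nonneg ha hc₀]
    _ ≤ ∫ ξ in c..b, ((1 - ξ ^ 2) ^ ((s - 1) / 2) * ψ' ξ ^ 2
          - a * (-(s - 1) * ξ * (1 - ξ ^ 2) ^ ((s - 3) / 2)) * ψ ξ ^ 2) :=
      le_integral_weighted_deriv_sq_sub a hcb (fun x hx => hasDerivAt_one_sub_sq_rpow s (hsub hx))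
        (fun x hx => hψ x (hsub hx))
        (((continuousOn_const.mul continuousOn_id).mul (continuousOn_one_sub_sq_rpow _)).mono hsub)
        (hψ'.mono hsub) (fun x hx => by have := one_sub_sq_pos_of_mem_Ioo (hsub hx); positivity)
    _ = _ := integral_congr fun ξ _ => by rw [haγ]; ring

theorem le_integral_dipole_neg_one {s γ b : ℝ} {ψ ψ' : ℝ → ℝ} (hs : 1 < s) (hγ : 0 ≤ γ)
    (hψ : ∀ ξ ∈ Ioo (-1 : ℝ) 1, HasDerivAt ψ (ψ' ξ) ξ) (hψ' : ContinuousOn ψ' (Ioo (-1 : ℝ) 1))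
    (hf : IntervalIntegrable (fun ξ => (1 - ξ ^ 2) ^ ((s - 1) / 2) * ψ' ξ ^ 2
      + γ * (1 - ξ ^ 2) ^ ((s - 3) / 2) * ξ * ψ ξ ^ 2) volume (-1) 1)
    (hw : IntervalIntegrable (fun ξ => (1 - ξ ^ 2) ^ ((s - 3) / 2) * ψ ξ ^ 2) volume (-1) 1)
    (hnorm : ∫ ξ in (-1 : ℝ)..1, (1 - ξ ^ 2) ^ ((s - 3) / 2) * ψ ξ ^ 2 = 1)
    (hb : b ∈ Ioo (-1 : ℝ) 1) :
    -(γ / (s - 1)) ^ 2 - γ / (s - 1) * ((1 - b ^ 2) ^ ((s - 1) / 2) * ψ b ^ 2)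
      ≤ ∫ ξ in (-1 : ℝ)..b, ((1 - ξ ^ 2) ^ ((s - 1) / 2) * ψ' ξ ^ 2
          + γ * (1 - ξ ^ 2) ^ ((s - 3) / 2) * ξ * ψ ξ ^ 2) := by
  refine le_intervalIntegral_of_frequently_nhdsGT hb.1
    (hf.mono_set (uIcc_subset_uIcc left_mem_uIcc (Ioo_subset_Icc_self.trans Icc_subset_uIcc hb)))
    (Eventually.frequently ?_)
  filter_upwards [Ioo_mem_nhdsGT hb.1] with c hc
  have hmass : ∫ ξ in c..b, (1 - ξ ^ 2) ^ ((s - 3) / 2) * ψ ξ ^ 2 ≤ 1 := by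
    refine (integral_mono_interval hc.1.le hc.2.le hb.2.le ?_ hw).trans hnorm.le
    refine ae_restrict_of_forall_mem measurableSet_Ioc fun x hx => ?_
    exact mul_nonneg (rpow_nonneg (by nlinarith [hx.1, hx.2]) _) (sq_nonneg _)
  calc _ ≤ -(γ / (s - 1)) ^ 2 * (∫ ξ in c..b, (1 - ξ ^ 2) ^ ((s - 3) / 2) * ψ ξ ^ 2)
        - γ / (s - 1) * ((1 - b ^ 2) ^ ((s - 1) / 2) * ψ b ^ 2) := by
        linarith [mul_le_mul_of_nonneg_left hmass (sq_nonneg (γ / (s - 1)))]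
    _ ≤ _ := le_integral_dipole_of_subinterval hs hγ hψ hψ' hc.1 hc.2.le hb.2

theorem dipole_form_lower_bound_general (n : ℕ) (hn : 3 ≤ n) (γ : ℝ) (hγ : 0 ≤ γ)
    (ψ ψ' : ℝ → ℝ)
    (hderiv : ∀ ξ ∈ Set.Ioo (-1 : ℝ) 1, HasDerivAt ψ (ψ' ξ) ξ)
    (hcont' : ContinuousOn ψ' (Set.Ioo (-1 : ℝ) 1))
    (hint1 : IntervalIntegrable
      (fun ξ => (1 - ξ ^ 2) ^ (((n : ℝ) - 1) / 2) * (ψ' ξ) ^ 2) MeasureTheory.volume (-1) 1)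
    (hint2 : IntervalIntegrable
      (fun ξ => (1 - ξ ^ 2) ^ (((n : ℝ) - 3) / 2) * ξ * (ψ ξ) ^ 2) MeasureTheory.volume (-1) 1)
    (hint3 : IntervalIntegrable
      (fun ξ => (1 - ξ ^ 2) ^ (((n : ℝ) - 3) / 2) * (ψ ξ) ^ 2) MeasureTheory.volume (-1) 1)
    (hnorm : ∫ ξ in (-1 : ℝ)..1, (1 - ξ ^ 2) ^ (((n : ℝ) - 3) / 2) * (ψ ξ) ^ 2 = 1) :
    (∫ ξ in (-1 : ℝ)..1,
        ((1 - ξ ^ 2) ^ (((n : ℝ) - 1) / 2) * (ψ' ξ) ^ 2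
          + γ * (1 - ξ ^ 2) ^ (((n : ℝ) - 3) / 2) * ξ * (ψ ξ) ^ 2))
      ≥ -γ ^ 2 / ((n : ℝ) - 1) ^ 2 := by
  have hs : (1 : ℝ) < n := by norm_cast; omega
  set a := γ / ((n : ℝ) - 1)
  have hf := hint1.add (hint2.const_mul γ)
  simp only [← mul_assoc] at hf
  rw [ge_iff_le, neg_div, ← div_pow]
  refine le_of_forall_lt_imp_le_of_dense fun m hm =>
    le_intervalIntegral_of_frequently_nhdsLT (by norm_num) hf ?_
  have hg := (hint3.continuousOn_mul (g := fun ξ => 1 + ξ) (by fun_prop)).const_mul a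
  refine (frequently_sub_mul_lt_of_intervalIntegrable (by norm_num) hg (sub_pos.2 hm)).mp ?_
  filter_upwards [Ioo_mem_nhdsLT (by norm_num : (-1 : ℝ) < 1)] with b hb hsmall
  have hbound := le_integral_dipole_neg_one hs hγ hderiv hcont' hf hint3 hnorm hb
  have hfactor : a * ((1 - b ^ 2) ^ (((n : ℝ) - 1) / 2) * ψ b ^ 2)
      = (1 - b) * (a * ((1 + b) * ((1 - b ^ 2) ^ (((n : ℝ) - 3) / 2) * ψ b ^ 2))) := by
    rw [one_sub_sq_rpow_eq_mul _ hb]; ring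
  linarith

/-- Quadratic-form lower bound for the dipole angular operator in dimension `n ≥ 3`. -/
theorem dipole_form_lower_bound (n : ℕ) (hn : 3 ≤ n) (γ : ℝ) (hγ : 0 ≤ γ)
    (ψ ψ' : ℝ → ℝ)
    (hderiv : ∀ ξ ∈ Set.Ioo (-1 : ℝ) 1, HasDerivAt ψ (ψ' ξ) ξ)
    (hcont : ContinuousOn ψ (Set.Ioo (-1 : ℝ) 1))
    (hcont' : ContinuousOn ψ' (Set.Ioo (-1 : ℝ) 1))
    (hint1 : IntervalIntegrable
      (fun ξ => (1 - ξ ^ 2) ^ (((n : ℝ) - 1) / 2) * (ψ' ξ) ^ 2) MeasureTheory.volume (-1) 1)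
    (hint2 : IntervalIntegrable
      (fun ξ => (1 - ξ ^ 2) ^ (((n : ℝ) - 3) / 2) * ξ * (ψ ξ) ^ 2) MeasureTheory.volume (-1) 1)
    (hint3 : IntervalIntegrable
      (fun ξ => (1 - ξ ^ 2) ^ (((n : ℝ) - 3) / 2) * (ψ ξ) ^ 2) MeasureTheory.volume (-1) 1)
    (hnorm : ∫ ξ in (-1 : ℝ)..1, (1 - ξ ^ 2) ^ (((n : ℝ) - 3) / 2) * (ψ ξ) ^ 2 = 1) :
    (∫ ξ in (-1 : ℝ)..1,
        ((1 - ξ ^ 2) ^ (((n : ℝ) - 1) / 2) * (ψ' ξ) ^ 2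
          + γ * (1 - ξ ^ 2) ^ (((n : ℝ) - 3) / 2) * ξ * (ψ ξ) ^ 2))
      ≥ -γ ^ 2 / ((n : ℝ) - 1) ^ 2 :=
  dipole_form_lower_bound_general n hn γ hγ ψ ψ' hderiv hcont' hint1 hint2 hint3 hnorm
end

section
/- For every s ≥ 0, the operator −d²/dx² + (s² − 1/4)/sin²(x) on C₀^∞((0,π)) in L²((0,π);dx) satisfies the quadratic-form lower bound ∫₀^π |φ'(x)|² dx + (s² − 1/4)∫₀^π |φ(x)|²/sin²(x) dx ≥ (1/2 + s)² ∫₀^π |φ(x)|² dx for all φ ∈ C₀^∞((0,π)). -/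
open Real MeasureTheory

/-- Hardy-type inequality on `(0, π)` with trigonometric weight: for every `s ≥ 0` and
every `φ ∈ C₀^∞((0,π))`,
`∫₀^π |φ'|² + (s² - 1/4) ∫₀^π |φ|²/sin² ≥ (1/2 + s)² ∫₀^π |φ|²`. -/
theorem hardy_trig_inequality (s : ℝ) (hs : 0 ≤ s) (φ : ℝ → ℝ)
    (hφ : ContDiff ℝ (⊤ : ℕ∞) φ) (hsupp : HasCompactSupport φ)
    (hsupp' : tsupport φ ⊆ Set.Ioo 0 π) :
    (∫ x in (0 : ℝ)..π, (deriv φ x) ^ 2)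
        + (s ^ 2 - 1 / 4) * ∫ x in (0 : ℝ)..π, (φ x) ^ 2 / (Real.sin x) ^ 2
      ≥ (1 / 2 + s) ^ 2 * ∫ x in (0 : ℝ)..π, (φ x) ^ 2 := by
  rcases (tsupport φ).eq_empty_or_nonempty with hK | hne
  · have hφ0 : φ = fun _ => 0 := by
      funext x
      exact image_eq_zero_of_notMem_tsupport (by simp [hK])
    simp [hφ0]
  have hKc : IsCompact (tsupport φ) := hsupp
  set m := sInf (tsupport φ) with hmdef
  set M := sSup (tsupport φ) with hMdef
  have hm : m ∈ tsupport φ := hKc.sInf_mem hne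
  have hM : M ∈ tsupport φ := hKc.sSup_mem hne
  have hm0 : 0 < m := (hsupp' hm).1
  have hMπ : M < π := (hsupp' hM).2
  have hmM : m ≤ M := csInf_le_csSup hne hKc.bddBelow hKc.bddAbove
  set a := m / 2 with hadef
  set b := (M + π) / 2 with hbdef
  have ha0 : 0 < a := by positivity
  have ham : a < m := by rw [hadef]; linarith
  have hMb : M < b := by rw [hbdef]; linarith
  have hbπ : b < π := by rw [hbdef]; linarith
  have hab : a ≤ b := by linarith
  have hzero : ∀ x : ℝ, x < m ∨ M < x → φ x = 0 ∧ deriv φ x = 0 := by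
    intro x hx
    have hx' : x ∉ tsupport φ := by
      intro h
      rcases hx with h1 | h1
      · exact absurd (csInf_le hKc.bddBelow h) (not_le.2 h1)
      · exact absurd (le_csSup hKc.bddAbove h) (not_le.2 h1)
    refine ⟨image_eq_zero_of_notMem_tsupport hx', ?_⟩
    by_contra h
    exact hx' (support_deriv_subset (Function.mem_support.2 h))
  -- reduction of the three integrals to [a,b]
  have hred : ∀ f : ℝ → ℝ, (∀ x, x ≤ a → f x = 0) → (∀ x, b ≤ x → f x = 0) →
      IntervalIntegrable f volume a b →
      ∫ x in (0:ℝ)..π, f x = ∫ x in a..b, f x := by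
    intro f h1 h2 hi
    have e1 : Set.EqOn f (fun _ => (0:ℝ)) (Set.uIcc 0 a) := by
      intro x hx
      rw [Set.uIcc_of_le ha0.le] at hx
      exact h1 x hx.2
    have e2 : Set.EqOn f (fun _ => (0:ℝ)) (Set.uIcc b π) := by
      intro x hx
      rw [Set.uIcc_of_le hbπ.le] at hx
      exact h2 x hx.1
    have i1 : IntervalIntegrable f volume 0 a :=
      (continuousOn_const.congr e1).intervalIntegrable
    have i2 : IntervalIntegrable f volume b π :=
      (continuousOn_const.congr e2).intervalIntegrable
    have z1 : ∫ x in (0:ℝ)..a, f x = 0 := by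
      rw [intervalIntegral.integral_congr e1]; simp
    have z2 : ∫ x in b..π, f x = 0 := by
      rw [intervalIntegral.integral_congr e2]; simp
    rw [← intervalIntegral.integral_add_adjacent_intervals i1 (hi.trans i2),
      ← intervalIntegral.integral_add_adjacent_intervals hi i2, z1, z2]
    ring
  have hsinpos : ∀ x ∈ Set.uIcc a b, 0 < Real.sin x := by
    intro x hx
    rw [Set.uIcc_of_le hab] at hx
    exact Real.sin_pos_of_pos_of_lt_pi (lt_of_lt_of_le ha0 hx.1) (lt_of_le_of_lt hx.2 hbπ)
  have hsinne : ∀ x ∈ Set.uIcc a b, Real.sin x ≠ 0 := fun x hx => (hsinpos x hx).ne'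
  have hcφ : Continuous φ := hφ.continuous
  have hcφ' : Continuous (deriv φ) := hφ.continuous_deriv (by simp)
  have hφd : Differentiable ℝ φ := hφ.differentiable (by simp)
  set w : ℝ → ℝ := fun x => (1/2 + s) * (Real.cos x / Real.sin x) with hwdef
  have hcw : ContinuousOn w (Set.uIcc a b) :=
    continuousOn_const.mul
      (Real.continuous_cos.continuousOn.div Real.continuous_sin.continuousOn hsinne)
  set G : ℝ → ℝ := fun x =>
    2 * φ x * deriv φ x * w x - φ x ^ 2 * ((1/2 + s) / Real.sin x ^ 2) with hGdef
  have hcG : ContinuousOn G (Set.uIcc a b) := by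
    apply ContinuousOn.sub
    · exact ((continuousOn_const.mul hcφ.continuousOn).mul hcφ'.continuousOn).mul hcw
    · exact (hcφ.continuousOn.pow 2).mul
        (continuousOn_const.div ((Real.continuous_sin.continuousOn).pow 2)
          (fun x hx => pow_ne_zero 2 (hsinne x hx)))
  have hF : ∀ x ∈ Set.uIcc a b, HasDerivAt (fun y => φ y ^ 2 * w y) (G x) x := by
    intro x hx
    have hsx := hsinne x hx
    have h1 : HasDerivAt (fun y => Real.cos y / Real.sin y)
        ((-Real.sin x * Real.sin x - Real.cos x * Real.cos x) / Real.sin x ^ 2) x :=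
      (Real.hasDerivAt_cos x).div (Real.hasDerivAt_sin x) hsx
    have h2 : HasDerivAt w ((1/2 + s) *
        ((-Real.sin x * Real.sin x - Real.cos x * Real.cos x) / Real.sin x ^ 2)) x :=
      h1.const_mul _
    have h3 : HasDerivAt (fun y => φ y ^ 2) (2 * φ x * deriv φ x) x := by
      have := ((hφd x).hasDerivAt).fun_pow 2
      simpa using this
    have h4 : HasDerivAt (fun y => φ y ^ 2 * w y) _ x := h3.fun_mul h2
    convert h4 using 1
    rw [hGdef, hwdef]
    have hpyth := Real.sin_sq_add_cos_sq x
    field_simp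
    linear_combination (φ x ^ 2) * hpyth
  have hφa : φ a = 0 := (hzero a (Or.inl ham)).1
  have hφb : φ b = 0 := (hzero b (Or.inr hMb)).1
  have hGint : IntervalIntegrable G volume a b := hcG.intervalIntegrable
  have hintG : ∫ x in a..b, G x = 0 := by
    rw [intervalIntegral.integral_eq_sub_of_hasDerivAt hF hGint]
    simp [hφa, hφb]
  have i1 : IntervalIntegrable (fun x => deriv φ x ^ 2) volume a b :=
    ((hcφ'.pow 2).continuousOn).intervalIntegrable
  have i2 : IntervalIntegrable (fun x => φ x ^ 2 / Real.sin x ^ 2) volume a b :=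
    ((hcφ.continuousOn.pow 2).div ((Real.continuous_sin.continuousOn).pow 2)
      (fun x hx => pow_ne_zero 2 (hsinne x hx))).intervalIntegrable
  have i3 : IntervalIntegrable (fun x => φ x ^ 2) volume a b :=
    ((hcφ.pow 2).continuousOn).intervalIntegrable
  have r1 : ∫ x in (0:ℝ)..π, deriv φ x ^ 2 = ∫ x in a..b, deriv φ x ^ 2 := by
    refine hred _ ?_ ?_ i1
    · intro x hx; rw [(hzero x (Or.inl (lt_of_le_of_lt hx ham))).2]; ring
    · intro x hx; rw [(hzero x (Or.inr (lt_of_lt_of_le hMb hx))).2]; ring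
  have r2 : ∫ x in (0:ℝ)..π, φ x ^ 2 / Real.sin x ^ 2
      = ∫ x in a..b, φ x ^ 2 / Real.sin x ^ 2 := by
    refine hred _ ?_ ?_ i2
    · intro x hx; rw [(hzero x (Or.inl (lt_of_le_of_lt hx ham))).1]; simp
    · intro x hx; rw [(hzero x (Or.inr (lt_of_lt_of_le hMb hx))).1]; simp
  have r3 : ∫ x in (0:ℝ)..π, φ x ^ 2 = ∫ x in a..b, φ x ^ 2 := by
    refine hred _ ?_ ?_ i3
    · intro x hx; rw [(hzero x (Or.inl (lt_of_le_of_lt hx ham))).1]; ring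
    · intro x hx; rw [(hzero x (Or.inr (lt_of_lt_of_le hMb hx))).1]; ring
  have hsq : IntervalIntegrable (fun x => (deriv φ x - w x * φ x) ^ 2) volume a b :=
    ((hcφ'.continuousOn.sub (hcw.mul hcφ.continuousOn)).pow 2).intervalIntegrable
  have eqpt : Set.EqOn
      (fun x => deriv φ x ^ 2 + (s ^ 2 - 1/4) * (φ x ^ 2 / Real.sin x ^ 2)
        - (1/2 + s) ^ 2 * φ x ^ 2)
      (fun x => (deriv φ x - w x * φ x) ^ 2 + G x) (Set.uIcc a b) := by
    intro x hx
    have hsx := hsinne x hx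
    simp only [hwdef, hGdef]
    field_simp
    linear_combination (-4 * φ x ^ 2 * (1 + 2*s) ^ 2) * (Real.sin_sq_add_cos_sq x)
  have e1 : ∫ x in a..b, (deriv φ x ^ 2 + (s ^ 2 - 1/4) * (φ x ^ 2 / Real.sin x ^ 2)
        - (1/2 + s) ^ 2 * φ x ^ 2)
      = (∫ x in a..b, deriv φ x ^ 2)
        + (s ^ 2 - 1/4) * (∫ x in a..b, φ x ^ 2 / Real.sin x ^ 2)
        - (1/2 + s) ^ 2 * (∫ x in a..b, φ x ^ 2) := by
    rw [intervalIntegral.integral_sub (i1.add (i2.const_mul _)) (i3.const_mul _),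
      intervalIntegral.integral_add i1 (i2.const_mul _),
      intervalIntegral.integral_const_mul, intervalIntegral.integral_const_mul]
  have e2 : ∫ x in a..b, ((deriv φ x - w x * φ x) ^ 2 + G x)
      = (∫ x in a..b, (deriv φ x - w x * φ x) ^ 2) + ∫ x in a..b, G x :=
    intervalIntegral.integral_add hsq hGint
  have key : (∫ x in a..b, deriv φ x ^ 2)
        + (s ^ 2 - 1/4) * (∫ x in a..b, φ x ^ 2 / Real.sin x ^ 2)
        - (1/2 + s) ^ 2 * (∫ x in a..b, φ x ^ 2)
      = ∫ x in a..b, (deriv φ x - w x * φ x) ^ 2 := by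
    rw [← e1, intervalIntegral.integral_congr eqpt, e2, hintG, add_zero]
  have sqnn : 0 ≤ ∫ x in a..b, (deriv φ x - w x * φ x) ^ 2 :=
    intervalIntegral.integral_nonneg hab (fun u _ => sq_nonneg _)
  rw [ge_iff_le, r1, r2, r3]
  linarith [key, sqnn]
end

section
/- For all φ ∈ C₀^∞((0,π)), ∫₀^π |φ'(x)|² dx ≥ (1/4) ∫₀^π |φ(x)|²/sin²(x) dx + (1/4) ∫₀^π |φ(x)|² dx. -/
open Real MeasureTheory

private lemma hardy_algebra_A (s c p d : ℝ) (hs : s ≠ 0) (h : s^2 + c^2 = 1) :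
    (1/2) * (p^2 / s^2) + 2 * (-(1/2)*(c/s)) * p * d
    = -(1/2) * ((-s*s - c*c)/s^2) * p^2 + (-(1/2)*(c/s)) * (2*p*d) := by
  field_simp
  linear_combination (-p^2) * h

private lemma hardy_algebra_B (s c p d : ℝ) (hs : s ≠ 0) (h : s^2 + c^2 = 1) :
    d^2 - (1/4)*(p^2/s^2) - (1/4)*p^2
    = (d + (-(1/2)*(c/s))*p)^2 - ((1/2)*(p^2/s^2) + 2*(-(1/2)*(c/s))*p*d) := by
  field_simp
  linear_combination (-4*p^2) * h

/-- Refined Hardy inequality on `(0, π)`: for every `φ ∈ C₀^∞((0,π))`,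
`∫₀^π |φ'|² ≥ (1/4) ∫₀^π |φ|²/sin² + (1/4) ∫₀^π |φ|²`. -/
theorem refined_hardy_inequality (φ : ℝ → ℝ)
    (hφ : ContDiff ℝ (⊤ : ℕ∞) φ) (hsupp : HasCompactSupport φ)
    (hsupp' : tsupport φ ⊆ Set.Ioo 0 π) :
    (∫ x in (0 : ℝ)..π, (deriv φ x) ^ 2)
      ≥ (1 / 4) * (∫ x in (0 : ℝ)..π, (φ x) ^ 2 / (Real.sin x) ^ 2)
        + (1 / 4) * ∫ x in (0 : ℝ)..π, (φ x) ^ 2 := by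
  have hφc : Continuous φ := hφ.continuous
  have hφ' : Continuous (deriv φ) := hφ.continuous_deriv (by simp)
  -- sin is nonzero on the support
  have hsin : ∀ x ∈ tsupport φ, Real.sin x ≠ 0 := fun x hx =>
    ne_of_gt (Real.sin_pos_of_pos_of_lt_pi (hsupp' hx).1 (hsupp' hx).2)
  -- φ is eventually 0 off its support
  have hφ0 : ∀ x ∉ tsupport φ, ∀ᶠ y in nhds x, φ y = 0 := by
    intro x hx
    filter_upwards [(isClosed_tsupport φ).isOpen_compl.mem_nhds hx] with y hy
    exact image_eq_zero_of_notMem_tsupport hy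
  have hdφ0 : ∀ x ∉ tsupport φ, deriv φ x = 0 := by
    intro x hx
    have hev : φ =ᶠ[nhds x] (fun _ => (0:ℝ)) := hφ0 x hx
    rw [hev.deriv_eq]
    simp
  have hdφ0' : ∀ x ∉ tsupport φ, ∀ᶠ y in nhds x, deriv φ y = 0 := by
    intro x hx
    filter_upwards [(isClosed_tsupport φ).isOpen_compl.mem_nhds hx] with y hy
    exact hdφ0 y hy
  set V : ℝ → ℝ := fun x => -(1/2) * (Real.cos x / Real.sin x) with hVdef
  set F : ℝ → ℝ := fun x => deriv φ x + V x * φ x with hFdef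
  set G : ℝ → ℝ := fun x => (1/2) * ((φ x)^2 / (Real.sin x)^2)
      + 2 * V x * φ x * deriv φ x with hGdef
  set g : ℝ → ℝ := fun x => V x * (φ x)^2 with hgdef
  -- continuity of the auxiliary functions
  have hcontA : Continuous (fun x => (φ x) ^ 2 / (Real.sin x) ^ 2) := by
    rw [continuous_iff_continuousAt]
    intro x
    by_cases hx : x ∈ tsupport φ
    · exact ((hφc.pow 2).continuousAt).div ((Real.continuous_sin.pow 2).continuousAt)
        (pow_ne_zero 2 (hsin x hx))
    · have hev : (fun y => (φ y) ^ 2 / (Real.sin y) ^ 2) =ᶠ[nhds x]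
          (fun _ => (0:ℝ)) := by
        filter_upwards [hφ0 x hx] with y hy
        simp [hy]
      exact ContinuousAt.congr continuousAt_const hev.symm
  have hcontF : Continuous F := by
    rw [continuous_iff_continuousAt]
    intro x
    by_cases hx : x ∈ tsupport φ
    · exact (hφ'.continuousAt).add ((((continuousAt_const).mul
        ((Real.continuous_cos.continuousAt).div (Real.continuous_sin.continuousAt)
          (hsin x hx)))).mul hφc.continuousAt)
    · have hev : F =ᶠ[nhds x] (fun _ => (0:ℝ)) := by
        filter_upwards [hφ0 x hx, hdφ0' x hx] with y hy hy'
        simp [hFdef, hy, hy']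
      exact ContinuousAt.congr continuousAt_const hev.symm
  have hcontG : Continuous G := by
    rw [continuous_iff_continuousAt]
    intro x
    by_cases hx : x ∈ tsupport φ
    · have h1 : ContinuousAt (fun x => (φ x) ^ 2 / (Real.sin x) ^ 2) x :=
        hcontA.continuousAt
      have h2 : ContinuousAt V x := (continuousAt_const).mul
        ((Real.continuous_cos.continuousAt).div (Real.continuous_sin.continuousAt)
          (hsin x hx))
      exact ((continuousAt_const.mul h1)).add
        ((((continuousAt_const.mul h2)).mul hφc.continuousAt).mul hφ'.continuousAt)
    · have hev : G =ᶠ[nhds x] (fun _ => (0:ℝ)) := by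
        filter_upwards [hφ0 x hx, hdφ0' x hx] with y hy hy'
        simp [hGdef, hy, hy']
      exact ContinuousAt.congr continuousAt_const hev.symm
  -- G is the derivative of g
  have hgderiv : ∀ x ∈ Set.uIcc (0:ℝ) π, HasDerivAt g (G x) x := by
    intro x _
    by_cases hx : x ∈ tsupport φ
    · have hs := hsin x hx
      have hφd : HasDerivAt φ (deriv φ x) x := (hφ.differentiable (by simp) x).hasDerivAt
      have hVd : HasDerivAt V (-(1/2) * ((-Real.sin x * Real.sin x
          - Real.cos x * Real.cos x) / (Real.sin x)^2)) x :=
        ((Real.hasDerivAt_cos x).div (Real.hasDerivAt_sin x) hs).const_mul (-(1/2))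
      have hsq : HasDerivAt (fun y => (φ y)^2) (2 * φ x * deriv φ x) x := by
        simpa using hφd.fun_pow 2
      have hmul : HasDerivAt (fun y => V y * (φ y)^2) _ x := hVd.fun_mul hsq
      convert hmul using 1
      simp only [hGdef, hVdef]
      exact hardy_algebra_A (Real.sin x) (Real.cos x) (φ x) (deriv φ x) hs
        (Real.sin_sq_add_cos_sq x)
    · have hev : g =ᶠ[nhds x] (fun _ => (0:ℝ)) := by
        filter_upwards [hφ0 x hx] with y hy
        simp [hgdef, hy]
      have hd : HasDerivAt g 0 x :=
        (hasDerivAt_const x (0:ℝ)).congr_of_eventuallyEq hev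
      have hG0 : G x = 0 := by
        simp [hGdef, image_eq_zero_of_notMem_tsupport hx, hdφ0 x hx]
      rwa [hG0]
  -- ∫ G = 0
  have hGint : IntervalIntegrable G volume 0 π := hcontG.intervalIntegrable 0 π
  have hintG : (∫ x in (0:ℝ)..π, G x) = 0 := by
    rw [intervalIntegral.integral_eq_sub_of_hasDerivAt hgderiv hGint]
    have h0 : φ 0 = 0 := image_eq_zero_of_notMem_tsupport (fun h => (hsupp' h).1.false)
    have hπ : φ π = 0 := image_eq_zero_of_notMem_tsupport (fun h => (hsupp' h).2.false)
    simp [hgdef, h0, hπ]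
  -- pointwise identity
  have hpt : ∀ x, (deriv φ x)^2 - (1/4) * ((φ x)^2 / (Real.sin x)^2)
      - (1/4) * (φ x)^2 = F x ^ 2 - G x := by
    intro x
    by_cases hx : x ∈ tsupport φ
    · have hs := hsin x hx
      simp only [hFdef, hGdef, hVdef]
      have := hardy_algebra_B (Real.sin x) (Real.cos x) (φ x) (deriv φ x) hs
        (Real.sin_sq_add_cos_sq x)
      convert this using 2 <;> ring
    · simp [hFdef, hGdef, image_eq_zero_of_notMem_tsupport hx, hdφ0 x hx]
  -- integrabilities
  have hi1 : IntervalIntegrable (fun x => (deriv φ x)^2) volume 0 π :=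
    (hφ'.pow 2).intervalIntegrable 0 π
  have hi2 : IntervalIntegrable (fun x => (φ x)^2 / (Real.sin x)^2) volume 0 π :=
    hcontA.intervalIntegrable 0 π
  have hi3 : IntervalIntegrable (fun x => (φ x)^2) volume 0 π :=
    ((hφc.pow 2)).intervalIntegrable 0 π
  have hiF : IntervalIntegrable (fun x => F x ^ 2) volume 0 π :=
    (hcontF.pow 2).intervalIntegrable 0 π
  -- main computation
  have key : (∫ x in (0:ℝ)..π, (deriv φ x)^2)
      - (1/4) * (∫ x in (0:ℝ)..π, (φ x)^2 / (Real.sin x)^2)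
      - (1/4) * (∫ x in (0:ℝ)..π, (φ x)^2)
      = ∫ x in (0:ℝ)..π, F x ^ 2 := by
    rw [← intervalIntegral.integral_const_mul, ← intervalIntegral.integral_const_mul,
      ← intervalIntegral.integral_sub hi1 (hi2.const_mul _),
      ← intervalIntegral.integral_sub ((hi1.sub (hi2.const_mul _))) (hi3.const_mul _)]
    rw [intervalIntegral.integral_congr (g := fun x => F x ^ 2 - G x)
      (fun x _ => hpt x)]
    rw [intervalIntegral.integral_sub hiF hGint, hintG, sub_zero]
  have hF2 : (0:ℝ) ≤ ∫ x in (0:ℝ)..π, F x ^ 2 :=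
    intervalIntegral.integral_nonneg Real.pi_pos.le (fun x _ => sq_nonneg _)
  linarith [key, hF2]
end

section
/- Let J be a countable index set, H a complex Hilbert space, T ≥ cI self-adjoint, W self-adjoint with dom(|T|^{1/2}) ⊆ dom(|W|^{1/2}), and Φ_j ∈ B(H) leaving dom(|T|^{1/2}) invariant. Assume (i) Σ_j Φ_j*Φ_j ≤ I, (ii) Σ_j |q_W(Φ_j f, Φ_j f)| ≥ D^{−1}|q_W(f,f)| for all f ∈ dom(|T|^{1/2}), and (iii) Σ_j ‖|T|^{1/2}Φ_j f‖² ≤ d‖|T|^{1/2} f‖² + e‖f‖² for all f ∈ dom(|T|^{1/2}), where d, D > 0 and e ≥ 0. If |q_W(Φ_j f, Φ_j f)| ≤ a·q_T(Φ_j f, Φ_j f) + b‖Φ_j f‖² for all f and all j, then |q_W(f,f)| ≤ a·d·D·q_T(f,f) + (a·e + b)·D·‖f‖² for all f ∈ dom(|T|^{1/2}). -/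
/-! Sum the local bounds over `j`: by (ii) the left side controls `D⁻¹ |q_W(f,f)|`, and by (iii)
and (i) the two sums on the right are bounded by `d q_T(f,f) + e ‖f‖²` and `‖f‖²`. -/

theorem tsum_le_mul_tsum_add_mul_tsum {ι : Type*} {u v w : ι → ℝ} {a b : ℝ}
    (hu : Summable u) (hv : Summable v) (hw : Summable w) (h : ∀ i, u i ≤ a * v i + b * w i) :
    ∑' i, u i ≤ a * ∑' i, v i + b * ∑' i, w i := by
  rw [← tsum_mul_left, ← tsum_mul_left, ← (hv.mul_left a).tsum_add (hw.mul_left b)]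
  exact hu.tsum_le_tsum h ((hv.mul_left a).add (hw.mul_left b))

theorem ims_localization_general
    {H : Type*} [NormedAddCommGroup H] [InnerProductSpace ℂ H]
    {J : Type*}
    (dom : Set H) (qW qT : H → ℝ) (Φ : J → H →L[ℂ] H)
    (a b e : ℝ) (d D : ℝ) (ha : 0 ≤ a) (hb : 0 ≤ b) (hD : 0 < D)
    -- (i)  Σ_j Φ_j*Φ_j ≤ I  (in the quadratic-form sense)
    (hi : ∀ f : H, Summable (fun j => ‖Φ j f‖ ^ 2) ∧ ∑' j, ‖Φ j f‖ ^ 2 ≤ ‖f‖ ^ 2)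
    -- (ii)  Σ_j |q_W(Φ_j f, Φ_j f)| ≥ D⁻¹ |q_W(f,f)|
    (hii : ∀ f ∈ dom, Summable (fun j => |qW (Φ j f)|) ∧
      D⁻¹ * |qW f| ≤ ∑' j, |qW (Φ j f)|)
    -- (iii)  Σ_j ‖|T|^{1/2} Φ_j f‖² ≤ d ‖|T|^{1/2} f‖² + e ‖f‖²
    (hiii : ∀ f ∈ dom, Summable (fun j => qT (Φ j f)) ∧
      ∑' j, qT (Φ j f) ≤ d * qT f + e * ‖f‖ ^ 2)
    -- local relative form bounds
    (hloc : ∀ f ∈ dom, ∀ j, |qW (Φ j f)| ≤ a * qT (Φ j f) + b * ‖Φ j f‖ ^ 2) :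
    ∀ f ∈ dom, |qW f| ≤ a * d * D * qT f + (a * e + b) * D * ‖f‖ ^ 2 := by
  intro f hf
  obtain ⟨hsumW, hW⟩ := hii f hf
  obtain ⟨hsumT, hT⟩ := hiii f hf
  obtain ⟨hsumN, hN⟩ := hi f
  have hlocal := tsum_le_mul_tsum_add_mul_tsum hsumW hsumT hsumN (hloc f hf)
  have hglobal : D⁻¹ * |qW f| ≤ a * (d * qT f + e * ‖f‖ ^ 2) + b * ‖f‖ ^ 2 :=
    calc D⁻¹ * |qW f| ≤ ∑' j, |qW (Φ j f)| := hW
      _ ≤ a * ∑' j, qT (Φ j f) + b * ∑' j, ‖Φ j f‖ ^ 2 := hlocal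
      _ ≤ a * (d * qT f + e * ‖f‖ ^ 2) + b * ‖f‖ ^ 2 := by gcongr
  calc |qW f| ≤ D * (a * (d * qT f + e * ‖f‖ ^ 2) + b * ‖f‖ ^ 2) :=
        (inv_mul_le_iff₀ hD).mp hglobal
    _ = a * d * D * qT f + (a * e + b) * D * ‖f‖ ^ 2 := by ring

/-- Abstract IMS-type localization lemma (variant of Morgan's theorem): local relative form
bounds `|q_W(Φ_j f, Φ_j f)| ≤ a q_T(Φ_j f, Φ_j f) + b‖Φ_j f‖²` imply the global bound
`|q_W(f,f)| ≤ a d D q_T(f,f) + (a e + b) D ‖f‖²` on the form domain `dom`.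
Here `qW f` stands for `q_W(f,f)` and `qT f` for the (nonnegative) quadratic form of `T`,
so that `qT f = ‖|T|^{1/2} f‖²`. -/
theorem ims_localization
    {H : Type*} [NormedAddCommGroup H] [InnerProductSpace ℂ H]
    {J : Type*} [Countable J]
    (dom : Set H) (qW qT : H → ℝ) (Φ : J → H →L[ℂ] H)
    (a b e : ℝ) (d D : ℝ) (ha : 0 ≤ a) (hb : 0 ≤ b) (he : 0 ≤ e) (hd : 0 < d) (hD : 0 < D)
    (hqT : ∀ f ∈ dom, 0 ≤ qT f)
    (hinv : ∀ j, ∀ f ∈ dom, Φ j f ∈ dom)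
    -- (i)  Σ_j Φ_j*Φ_j ≤ I  (in the quadratic-form sense)
    (hi : ∀ f : H, Summable (fun j => ‖Φ j f‖ ^ 2) ∧ ∑' j, ‖Φ j f‖ ^ 2 ≤ ‖f‖ ^ 2)
    -- (ii)  Σ_j |q_W(Φ_j f, Φ_j f)| ≥ D⁻¹ |q_W(f,f)|
    (hii : ∀ f ∈ dom, Summable (fun j => |qW (Φ j f)|) ∧
      D⁻¹ * |qW f| ≤ ∑' j, |qW (Φ j f)|)
    -- (iii)  Σ_j ‖|T|^{1/2} Φ_j f‖² ≤ d ‖|T|^{1/2} f‖² + e ‖f‖²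
    (hiii : ∀ f ∈ dom, Summable (fun j => qT (Φ j f)) ∧
      ∑' j, qT (Φ j f) ≤ d * qT f + e * ‖f‖ ^ 2)
    -- local relative form bounds
    (hloc : ∀ f ∈ dom, ∀ j, |qW (Φ j f)| ≤ a * qT (Φ j f) + b * ‖Φ j f‖ ^ 2) :
    ∀ f ∈ dom, |qW f| ≤ a * d * D * qT f + (a * e + b) * D * ‖f‖ ^ 2 :=
  ims_localization_general dom qW qT Φ a b e d D ha hb hD hi hii hiii hloc
end
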